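/- Let q_u ∈ ℝ^{n_u}, Q_u ∈ 𝕊₊^{n_u}, u ∈ ℝ^{n_u} with u ∈ E(q_u, Q_u), and γ ∈ (0,1]. Define R_u := (1−γ) Q_u + (1 − 1/γ)(u − q_u)(u − q_u)ᵀ. If R_u is positive semidefinite, then the ellipsoid E(u, R_u) is contained in E(q_u, Q_u). -/

import Mathlib

open Matrix MeasureTheory

/-- The positive semidefinite square root of a positive semidefinite matrix
(the definition `Matrix.PosSemidef.sqrt` of the older Mathlib, since removed). -/
noncomputable def Matrix.PosSemidef.sqrt {n : Type*} [Fintype n] [DecidableEq n]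
    {A : Matrix n n ℝ} (hA : A.PosSemidef) : Matrix n n ℝ :=
  (hA.1.eigenvectorUnitary : Matrix n n ℝ) *
    diagonal (fun i => (Real.sqrt (hA.1.eigenvalues i) : ℝ)) *
    (star hA.1.eigenvectorUnitary : Matrix n n ℝ)

noncomputable def ellipsoid {m : ℕ} {Q : Matrix (Fin m) (Fin m) ℝ}
    (q : Fin m → ℝ) (hQ : Q.PosSemidef) : Set (Fin m → ℝ) :=
  {x | ∃ v : Fin m → ℝ, v ⬝ᵥ v ≤ 1 ∧ x = q + hQ.sqrt.mulVec v}

noncomputable def frob {p q : ℕ} (M : Matrix (Fin p) (Fin q) ℝ) : ℝ :=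
  Real.sqrt (Matrix.trace (Mᵀ * M))

/-! The ellipsoid `E(q, Q)` is the set of `x` with `(z ⬝ᵥ (x - q))² ≤ z ⬝ᵥ Q z` for every
direction `z`. In a fixed direction, put `a = z ⬝ᵥ Q z`, `b = z ⬝ᵥ (u - q)` and `c = z ⬝ᵥ (x - u)`
for `x ∈ E(u, R)`: then `b² ≤ a` and `c² ≤ z ⬝ᵥ R z = (1 - γ) a + (1 - γ⁻¹) b²`, and the weighted
inequality `(b + c)² ≤ b² / γ + c² / (1 - γ)` gives `(b + c)² = (z ⬝ᵥ (x - q))² ≤ a`. -/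

theorem sq_add_le_of_sq_le_of_sq_le {γ a b c : ℝ} (hγ : 0 < γ) (hb : b ^ 2 ≤ a)
    (hc : c ^ 2 ≤ (1 - γ) * a + (1 - γ⁻¹) * b ^ 2) : (b + c) ^ 2 ≤ a := by
  have hc' : γ * c ^ 2 ≤ γ * (1 - γ) * a + (γ - 1) * b ^ 2 :=
    calc γ * c ^ 2 ≤ γ * ((1 - γ) * a + (1 - γ⁻¹) * b ^ 2) := by gcongr
      _ = γ * (1 - γ) * a + (γ - 1) * b ^ 2 := by field_simp
  rcases lt_or_ge γ 1 with hlt | hge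
  · nlinarith [sq_nonneg ((1 - γ) * b - γ * c), mul_pos hγ (sub_pos.2 hlt)]
  · -- for `γ ≥ 1` the hypotheses force `c = 0`
    have ha : 0 ≤ a := (sq_nonneg b).trans hb
    have : γ * c ^ 2 ≤ 0 := by
      nlinarith [mul_le_mul_of_nonneg_left hb (sub_nonneg.2 hge), mul_nonneg (sq_nonneg (γ - 1)) ha]
    have hc0 : c = 0 := by nlinarith [sq_nonneg c]
    simpa [hc0] using hb

namespace Matrix

variable {n : Type*} [Fintype n]

theorem dotProduct_sq_le_dotProduct_self_mul_dotProduct_self (x y : n → ℝ) :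
    (x ⬝ᵥ y) ^ 2 ≤ (x ⬝ᵥ x) * (y ⬝ᵥ y) := by
  simpa [dotProduct, sq] using Finset.sum_mul_sq_le_sq_mul_sq Finset.univ x y

theorem dotProduct_vecMulVec_self_mulVec (d z : n → ℝ) :
    z ⬝ᵥ vecMulVec d d *ᵥ z = (z ⬝ᵥ d) ^ 2 := by
  rw [vecMulVec_mulVec, op_smul_eq_smul, dotProduct_smul, smul_eq_mul, dotProduct_comm d, sq]

variable [DecidableEq n]

theorem IsHermitian.exists_mulVec_eq {Q : Matrix n n ℝ} (hQ : Q.IsHermitian) {y : n → ℝ}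
    (hy : ∀ z, Q *ᵥ z = 0 → z ⬝ᵥ y = 0) : ∃ w, Q *ᵥ w = y := by
  set T := toEuclideanLin Q
  have hT : LinearMap.adjoint T = T := by
    rw [← toEuclideanLin_conjTranspose_eq_adjoint, hQ.eq]
  have hmem : WithLp.toLp 2 y ∈ (LinearMap.ker T)ᗮ := by
    intro z hz
    have : Q *ᵥ z.ofLp = 0 := by simpa [T] using congrArg WithLp.ofLp hz
    simpa [EuclideanSpace.inner_eq_star_dotProduct, dotProduct_comm] using hy _ this
  rw [LinearMap.orthogonal_ker, hT] at hmem
  obtain ⟨w, hw⟩ := hmem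
  exact ⟨w.ofLp, by simpa [T] using congrArg WithLp.ofLp hw⟩

namespace PosSemidef

variable {A : Matrix n n ℝ} (hA : A.PosSemidef)

theorem posSemidef_sqrt : hA.sqrt.PosSemidef := by
  have hD : (diagonal fun i => Real.sqrt (hA.1.eigenvalues i)).PosSemidef :=
    posSemidef_diagonal_iff.2 fun i => Real.sqrt_nonneg _
  exact hD.mul_mul_conjTranspose_same (hA.1.eigenvectorUnitary : Matrix n n ℝ)

theorem transpose_sqrt : hA.sqrtᵀ = hA.sqrt :=
  (conjTranspose_eq_transpose_of_trivial _).symm.trans hA.posSemidef_sqrt.1.eq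

theorem sqrt_mul_self : hA.sqrt * hA.sqrt = A := by
  set U : Matrix n n ℝ := (hA.1.eigenvectorUnitary : Matrix n n ℝ)
  set D : Matrix n n ℝ := diagonal fun i => Real.sqrt (hA.1.eigenvalues i)
  have hUU : star U * U = 1 := Unitary.coe_star_mul_self _
  have hDD : D * D = diagonal (RCLike.ofReal ∘ hA.1.eigenvalues) := by
    rw [diagonal_mul_diagonal]
    congr 1
    funext i
    simp [Real.mul_self_sqrt (hA.eigenvalues_nonneg i)]
  calc U * D * star U * (U * D * star U) = U * (D * (star U * U) * D) * star U := by
        simp only [Matrix.mul_assoc]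
    _ = U * diagonal (RCLike.ofReal ∘ hA.1.eigenvalues) * star U := by
        rw [hUU, Matrix.mul_one, hDD]
    _ = A := by
        conv_rhs => rw [hA.1.spectral_theorem, Unitary.conjStarAlgAut_apply]

theorem sqrt_mulVec_dotProduct_sqrt_mulVec (z w : n → ℝ) :
    hA.sqrt *ᵥ z ⬝ᵥ hA.sqrt *ᵥ w = z ⬝ᵥ A *ᵥ w := by
  rw [← vecMul_transpose, hA.transpose_sqrt, ← dotProduct_mulVec, mulVec_mulVec, hA.sqrt_mul_self]

theorem dotProduct_sqrt_mulVec_sq_le (z w : n → ℝ) :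
    (z ⬝ᵥ hA.sqrt *ᵥ w) ^ 2 ≤ (z ⬝ᵥ A *ᵥ z) * (w ⬝ᵥ w) := by
  rw [dotProduct_mulVec, ← mulVec_transpose, hA.transpose_sqrt,
    ← hA.sqrt_mulVec_dotProduct_sqrt_mulVec]
  exact dotProduct_sq_le_dotProduct_self_mul_dotProduct_self _ _

end PosSemidef

end Matrix

theorem mem_ellipsoid_iff {m : ℕ} {Q : Matrix (Fin m) (Fin m) ℝ} (hQ : Q.PosSemidef)
    (q x : Fin m → ℝ) : x ∈ ellipsoid q hQ ↔ ∀ z, (z ⬝ᵥ (x - q)) ^ 2 ≤ z ⬝ᵥ Q *ᵥ z := by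
  constructor
  · rintro ⟨v, hv, rfl⟩ z
    rw [add_sub_cancel_left]
    calc (z ⬝ᵥ hQ.sqrt *ᵥ v) ^ 2 ≤ (z ⬝ᵥ Q *ᵥ z) * (v ⬝ᵥ v) := hQ.dotProduct_sqrt_mulVec_sq_le z v
      _ ≤ z ⬝ᵥ Q *ᵥ z := mul_le_of_le_one_right (hQ.dotProduct_mulVec_nonneg z) hv
  · intro h
    obtain ⟨w, hw⟩ := hQ.1.exists_mulVec_eq (y := x - q) fun z hz => by
      simpa [hz] using h z
    -- With `x - q = Q w = √Q (√Q w)`, the norm of `√Q w` is `s = w ⬝ᵥ (x - q)`, and `s ^ 2 ≤ s`.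
    refine ⟨hQ.sqrt *ᵥ w, ?_, ?_⟩
    · have hs : hQ.sqrt *ᵥ w ⬝ᵥ hQ.sqrt *ᵥ w = w ⬝ᵥ (x - q) := by
        rw [hQ.sqrt_mulVec_dotProduct_sqrt_mulVec, hw]
      have := h w
      rw [hw, ← hs] at this
      nlinarith
    · rw [mulVec_mulVec, hQ.sqrt_mul_self, hw, add_sub_cancel]

theorem stmt3_general {nu : ℕ} (qu u : Fin nu → ℝ) {Qu : Matrix (Fin nu) (Fin nu) ℝ}
    (hQu : Qu.PosSemidef) (hu : u ∈ ellipsoid qu hQu) (γ : ℝ) (hγ0 : 0 < γ)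
    {Ru : Matrix (Fin nu) (Fin nu) ℝ}
    (hRdef : Ru = (1 - γ) • Qu + (1 - γ⁻¹) • Matrix.vecMulVec (u - qu) (u - qu))
    (hRu : Ru.PosSemidef) :
    ellipsoid u hRu ⊆ ellipsoid qu hQu := by
  intro x hx
  rw [mem_ellipsoid_iff] at hu hx ⊢
  intro z
  have hR : z ⬝ᵥ Ru *ᵥ z = (1 - γ) * (z ⬝ᵥ Qu *ᵥ z) + (1 - γ⁻¹) * (z ⬝ᵥ (u - qu)) ^ 2 := by
    rw [hRdef, add_mulVec, smul_mulVec, smul_mulVec, dotProduct_add, dotProduct_smul,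
      dotProduct_smul, dotProduct_vecMulVec_self_mulVec, smul_eq_mul, smul_eq_mul]
  have h := sq_add_le_of_sq_le_of_sq_le hγ0 (hu z) (hR ▸ hx z)
  rwa [← dotProduct_add, sub_add_sub_cancel'] at h

theorem stmt3 {nu : ℕ} (qu u : Fin nu → ℝ) {Qu : Matrix (Fin nu) (Fin nu) ℝ}
    (hQu : Qu.PosSemidef) (hu : u ∈ ellipsoid qu hQu) (γ : ℝ) (hγ0 : 0 < γ) (hγ1 : γ ≤ 1)
    {Ru : Matrix (Fin nu) (Fin nu) ℝ}
    (hRdef : Ru = (1 - γ) • Qu + (1 - γ⁻¹) • Matrix.vecMulVec (u - qu) (u - qu))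
    (hRu : Ru.PosSemidef) :
    ellipsoid u hRu ⊆ ellipsoid qu hQu :=
  stmt3_general qu u hQu hu γ hγ0 hRdef hRu
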